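/- Let L ∈ ℝ^{M×K} have nonnegative entries and let w ∈ 𝒲 satisfy Σ_{j=1}^K w_j L(m,j) > 0 for every m. Then the discrete self-consistency iteration does not decrease the discrete log-likelihood: ℒ_dd(Ψ_dd w) ≥ ℒ_dd(w), where ℒ_dd(v) = (1/M) Σ_{m=1}^M log ( Σ_{k=1}^K v_k L(m,k) ) and [Ψ_dd w]_k = (w_k / M) Σ_{m=1}^M L(m,k) / (Σ_{j=1}^K w_j L(m,j)). -/

import Mathlib

/-!
Write `b m = ∑ₖ w k L(m,k)` and `r m k = w k L(m,k) / b m` for the posterior responsibilities, so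
that `M (Ψ w)_k = ∑ₘ r m k`. By the log-sum inequality (a consequence of `log x ≤ x - 1`),
`log ((Ψ-density of m) / b m) ≥ ∑ₖ r m k log ((Ψ w)_k / w k)` for every observation `m`.
Summing over `m` and exchanging the sums bounds `M (ℒ(Ψ w) - ℒ(w))` from below by
`M ∑ₖ (Ψ w)_k log ((Ψ w)_k / w k)`, which is nonnegative by Gibbs' inequality because both
`w` and `Ψ w` lie in the simplex.
-/

open Finset Real

namespace Real

theorem mul_log_div_le {x y c : ℝ} (hx : 0 ≤ x) (hy : 0 ≤ y) (hc : 0 < c) (hxy : 0 < x → 0 < y) :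
    x * log (y / x) ≤ x * log c + y / c - x := by
  rcases hx.eq_or_lt with rfl | hx
  · simpa using div_nonneg hy hc.le
  have hy := hxy hx
  have hsplit : log (y / x) = log c + log (y / (x * c)) := by
    rw [← log_mul hc.ne' (by positivity)]
    congr 1
    field_simp
  have hbound : x * log (y / (x * c)) ≤ y / c - x := by
    calc x * log (y / (x * c)) ≤ x * (y / (x * c) - 1) :=
          mul_le_mul_of_nonneg_left (log_le_sub_one_of_pos (by positivity)) hx.le
      _ = y / c - x := by field_simp
  rw [hsplit, mul_add]
  linarith

/-- The log-sum inequality. -/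
theorem sum_mul_log_div_le {ι : Type*} (s : Finset ι) {x y : ι → ℝ} (hx : ∀ i ∈ s, 0 ≤ x i)
    (hy : ∀ i ∈ s, 0 ≤ y i) (hxy : ∀ i ∈ s, 0 < x i → 0 < y i) :
    ∑ i ∈ s, x i * log (y i / x i) ≤ (∑ i ∈ s, x i) * log ((∑ i ∈ s, y i) / ∑ i ∈ s, x i) := by
  rcases (sum_nonneg hx).eq_or_lt with hX | hX
  · have hx0 : ∀ i ∈ s, x i = 0 := (sum_eq_zero_iff_of_nonneg hx).mp hX.symm
    rw [← hX, zero_mul]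
    exact (sum_eq_zero fun i hi => by rw [hx0 i hi, zero_mul]).le
  have hY : 0 < ∑ i ∈ s, y i := by
    obtain ⟨i, hi, hxi⟩ := exists_lt_of_sum_lt (f := fun _ => (0 : ℝ)) (by simpa using hX)
    exact sum_pos' hy ⟨i, hi, hxy i hi hxi⟩
  set c := (∑ i ∈ s, y i) / ∑ i ∈ s, x i
  have hc : 0 < c := div_pos hY hX
  calc ∑ i ∈ s, x i * log (y i / x i) ≤ ∑ i ∈ s, (x i * log c + y i / c - x i) :=
        sum_le_sum fun i hi => mul_log_div_le (hx i hi) (hy i hi) hc (hxy i hi)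
    _ = (∑ i ∈ s, x i) * log c + (∑ i ∈ s, y i) / c - ∑ i ∈ s, x i := by
        rw [sum_sub_distrib, sum_add_distrib, sum_mul, sum_div]
    _ = (∑ i ∈ s, x i) * log c := by
        rw [div_div_cancel₀ hY.ne']
        ring

/-- Gibbs' inequality. -/
theorem sum_mul_log_div_nonneg {ι : Type*} (s : Finset ι) {p q : ι → ℝ} (hp : ∀ i ∈ s, 0 ≤ p i)
    (hq : ∀ i ∈ s, 0 ≤ q i) (hpq : ∀ i ∈ s, 0 < p i → 0 < q i)
    (hsum : ∑ i ∈ s, q i = ∑ i ∈ s, p i) :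
    0 ≤ ∑ i ∈ s, p i * log (p i / q i) := by
  have hlogsum := sum_mul_log_div_le s hp hq hpq
  have hrhs : (∑ i ∈ s, p i) * log ((∑ i ∈ s, q i) / ∑ i ∈ s, p i) = 0 := by
    rcases eq_or_ne (∑ i ∈ s, p i) 0 with h | h <;> simp [hsum, h]
  have hneg : ∑ i ∈ s, p i * log (q i / p i) = -∑ i ∈ s, p i * log (p i / q i) := by
    rw [← sum_neg_distrib]
    exact sum_congr rfl fun i _ => by rw [← mul_neg, ← log_inv, inv_div]
  linarith

end Real

section EM

variable {ι κ : Type*} [Fintype κ] (L : ι → κ → ℝ) (w : κ → ℝ)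

def mixtureDensity (m : ι) : ℝ := ∑ k, w k * L m k

noncomputable def responsibility (m : ι) (k : κ) : ℝ := w k * L m k / mixtureDensity L w m

noncomputable def emUpdate [Fintype ι] (k : κ) : ℝ :=
  w k / Fintype.card ι * ∑ m, L m k / mixtureDensity L w m

variable {L w}

theorem sum_responsibility {m : ι} (hpos : 0 < mixtureDensity L w m) :
    ∑ k, responsibility L w m k = 1 := by
  rw [← div_self hpos.ne', mixtureDensity, sum_div]
  rfl

theorem card_mul_emUpdate [Fintype ι] [Nonempty ι] (k : κ) :
    Fintype.card ι * emUpdate L w k = ∑ m, responsibility L w m k := by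
  rw [emUpdate, ← mul_assoc, mul_div_cancel₀ _ (by positivity), mul_sum]
  simp_rw [responsibility, mul_div_assoc]

theorem sum_emUpdate [Fintype ι] [Nonempty ι] (hpos : ∀ m, 0 < mixtureDensity L w m) :
    ∑ k, emUpdate L w k = 1 := by
  have hcard : (Fintype.card ι : ℝ) ≠ 0 := by positivity
  refine (mul_right_inj' hcard).mp ?_
  rw [mul_sum, mul_one]
  simp_rw [card_mul_emUpdate]
  rw [sum_comm]
  simp [sum_responsibility (hpos _)]

theorem mixtureDensity_nonneg (hL : ∀ m k, 0 ≤ L m k) (hw : ∀ k, 0 ≤ w k) (m : ι) :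
    0 ≤ mixtureDensity L w m :=
  sum_nonneg fun k _ => mul_nonneg (hw k) (hL m k)

theorem emUpdate_nonneg [Fintype ι] (hL : ∀ m k, 0 ≤ L m k) (hw : ∀ k, 0 ≤ w k) (k : κ) :
    0 ≤ emUpdate L w k :=
  mul_nonneg (div_nonneg (hw k) (Nat.cast_nonneg _))
    (sum_nonneg fun m _ => div_nonneg (hL m k) (mixtureDensity_nonneg hL hw m))

theorem emUpdate_pos [Fintype ι] [Nonempty ι] (hL : ∀ m k, 0 ≤ L m k) (hw : ∀ k, 0 ≤ w k)
    (hpos : ∀ m, 0 < mixtureDensity L w m) {m : ι} {k : κ} (h : 0 < w k * L m k) :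
    0 < emUpdate L w k := by
  have hcard : (0 : ℝ) < Fintype.card ι := by positivity
  have hsum : 0 < ∑ m, responsibility L w m k :=
    sum_pos' (fun m _ => div_nonneg (mul_nonneg (hw k) (hL m k)) (hpos m).le)
      ⟨m, mem_univ m, div_pos h (hpos m)⟩
  rw [← card_mul_emUpdate] at hsum
  exact pos_of_mul_pos_right hsum hcard.le

theorem pos_of_emUpdate_pos [Fintype ι] (hw : ∀ k, 0 ≤ w k) {k : κ} (h : 0 < emUpdate L w k) :
    0 < w k :=
  (hw k).lt_of_ne fun h0 => by simp [emUpdate, ← h0] at h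

theorem mixtureDensity_emUpdate_pos [Fintype ι] [Nonempty ι] (hL : ∀ m k, 0 ≤ L m k)
    (hw : ∀ k, 0 ≤ w k) (hpos : ∀ m, 0 < mixtureDensity L w m) (m : ι) :
    0 < mixtureDensity L (emUpdate L w) m := by
  obtain ⟨k, -, hk⟩ := exists_lt_of_sum_lt (f := fun _ => (0 : ℝ))
    (by simpa only [sum_const_zero, mixtureDensity] using hpos m)
  exact sum_pos' (fun k _ => mul_nonneg (emUpdate_nonneg hL hw k) (hL m k))
    ⟨k, mem_univ k, mul_pos (emUpdate_pos hL hw hpos hk) (pos_of_mul_pos_right hk (hw k))⟩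

theorem sum_responsibility_mul_log_div_le (hL : ∀ m k, 0 ≤ L m k) (hw : ∀ k, 0 ≤ w k)
    {v : κ → ℝ} (hv : ∀ k, 0 ≤ v k) {m : ι} (hpos : 0 < mixtureDensity L w m)
    (hwv : ∀ k, 0 < w k * L m k → 0 < v k) :
    ∑ k, responsibility L w m k * log (v k / w k) ≤
      log (mixtureDensity L v m / mixtureDensity L w m) := by
  have hlogsum := sum_mul_log_div_le univ (x := fun k => w k * L m k) (y := fun k => v k * L m k)
    (fun k _ => mul_nonneg (hw k) (hL m k)) (fun k _ => mul_nonneg (hv k) (hL m k))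
    (fun k _ h => mul_pos (hwv k h) (pos_of_mul_pos_right h (hw k)))
  have hcancel : ∀ k, w k * L m k * log (v k * L m k / (w k * L m k)) =
      w k * L m k * log (v k / w k) := fun k => by
    rcases (hL m k).eq_or_lt with h | h
    · simp [← h]
    · rw [mul_div_mul_right _ _ h.ne']
  simp only [hcancel] at hlogsum
  simp only [responsibility, div_mul_eq_mul_div, ← sum_div]
  rw [div_le_iff₀ hpos, mul_comm]
  exact hlogsum

theorem sum_log_mixtureDensity_le_emUpdate [Fintype ι] [Nonempty ι] (hL : ∀ m k, 0 ≤ L m k)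
    (hw : ∀ k, 0 ≤ w k) (hw_sum : ∑ k, w k = 1) (hpos : ∀ m, 0 < mixtureDensity L w m) :
    ∑ m, log (mixtureDensity L w m) ≤ ∑ m, log (mixtureDensity L (emUpdate L w) m) := by
  set Ψ := emUpdate L w
  have gibbs : 0 ≤ ∑ k, Ψ k * log (Ψ k / w k) :=
    sum_mul_log_div_nonneg univ (fun k _ => emUpdate_nonneg hL hw k) (fun k _ => hw k)
      (fun k _ => pos_of_emUpdate_pos hw) (by rw [hw_sum, sum_emUpdate hpos])
  have jensen : ∀ m, ∑ k, responsibility L w m k * log (Ψ k / w k) ≤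
      log (mixtureDensity L Ψ m / mixtureDensity L w m) := fun m =>
    sum_responsibility_mul_log_div_le hL hw (emUpdate_nonneg hL hw) (hpos m)
      (fun k => emUpdate_pos hL hw hpos)
  calc ∑ m, log (mixtureDensity L w m)
      ≤ ∑ m, log (mixtureDensity L w m) + Fintype.card ι * ∑ k, Ψ k * log (Ψ k / w k) :=
        le_add_of_nonneg_right (mul_nonneg (Nat.cast_nonneg _) gibbs)
    _ = ∑ m, log (mixtureDensity L w m) +
          ∑ m, ∑ k, responsibility L w m k * log (Ψ k / w k) := by
        rw [sum_comm, mul_sum]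
        refine congrArg _ (sum_congr rfl fun k _ => ?_)
        rw [← mul_assoc, card_mul_emUpdate, sum_mul]
    _ ≤ ∑ m, log (mixtureDensity L w m) + ∑ m, log (mixtureDensity L Ψ m / mixtureDensity L w m) :=
        add_le_add_right (sum_le_sum fun m _ => jensen m) _
    _ = ∑ m, log (mixtureDensity L Ψ m) := by
        rw [← sum_add_distrib]
        refine sum_congr rfl fun m _ => ?_
        rw [log_div (mixtureDensity_emUpdate_pos hL hw hpos m).ne' (hpos m).ne']
        ring

end EM

/-- The discrete self-consistency (EM) iteration `Ψ_dd` does not decrease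
the discrete marginal log-likelihood `ℒ_dd`. -/
theorem discrete_iteration_increases_likelihood {M K : ℕ} (hM : 0 < M)
    (L : Fin M → Fin K → ℝ) (hL : ∀ m k, 0 ≤ L m k)
    (w : Fin K → ℝ) (hw_nonneg : ∀ k, 0 ≤ w k) (hw_sum : ∑ k, w k = 1)
    (hpos : ∀ m, 0 < ∑ j, w j * L m j)
    (Ψw : Fin K → ℝ)
    (hΨw : ∀ k, Ψw k = w k / (M : ℝ) * ∑ m, L m k / (∑ j, w j * L m j))
    (Ldd : (Fin K → ℝ) → ℝ)
    (hLdd : ∀ v, Ldd v = (1 / (M : ℝ)) * ∑ m, Real.log (∑ k, v k * L m k)) :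
    Ldd w ≤ Ldd Ψw := by
  have : Nonempty (Fin M) := ⟨⟨0, hM⟩⟩
  have hΨ : Ψw = emUpdate L w := funext fun k => by simp [hΨw, emUpdate, mixtureDensity]
  rw [hLdd, hLdd, hΨ]
  exact mul_le_mul_of_nonneg_left (sum_log_mixtureDensity_le_emUpdate hL hw_nonneg hw_sum hpos)
    (by positivity)
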